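/- arXiv:1902.10274 — 2 statements merged into one kernel-verified Lean document; each statement's English description precedes it below -/
import Mathlib

section
/- Let Y = UΣVᵀ be an SVD of Y ∈ ℝ^{m×n}. The minimum over X of ‖Y − X‖_F² + ‖X‖_{Θ,*} equals the minimum over B of ‖Σ − B‖_F² + ‖B‖_{Θ,*}, and if B̂ minimizes the latter then X̂ = UB̂Vᵀ minimizes the former. -/
open Matrix

/-- Singular values of a real matrix, in non-increasing order, indexed by column
index (padded with zeros). -/
noncomputable def singularValue {m n : ℕ} (X : Matrix (Fin m) (Fin n) ℝ) (i : Fin n) : ℝ :=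
  let g : Fin n → ℝ := fun j =>
    Real.sqrt ((Matrix.isHermitian_conjTranspose_mul_self X).eigenvalues j)
  g (Tuple.sort g (Fin.rev i))

/-- Weighted nuclear norm. -/
noncomputable def weightedNuclearNorm {m n : ℕ} (Θ : Fin n → ℝ)
    (X : Matrix (Fin m) (Fin n) ℝ) : ℝ :=
  ∑ j, Θ j * singularValue X j

/-! The substitution `X = U * B * Vᵀ` is a bijection of matrices that preserves the Frobenius
norm (a trace computation) and the singular values: it replaces `Bᵀ * B` by `V * (Bᵀ * B) * Vᵀ`,
which has the same characteristic polynomial and hence the same sorted eigenvalues. It therefore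
carries the objective for `Sig` onto the objective for `Y = U * Sig * Vᵀ`. -/

theorem Matrix.trace_mul_transpose_self {ι κ R : Type*} [Fintype ι] [Fintype κ] [CommSemiring R]
    (M : Matrix ι κ R) : trace (M * Mᵀ) = ∑ i, ∑ j, M i j ^ 2 := by
  simp [trace, mul_apply, sq]

theorem Matrix.sum_sq_mul_mul_transpose {ι κ ι' κ' R : Type*} [Fintype ι] [Fintype κ]
    [Fintype ι'] [Fintype κ'] [DecidableEq ι] [DecidableEq κ] [CommRing R]
    {U : Matrix ι' ι R} {V : Matrix κ' κ R} (hU : Uᵀ * U = 1) (hV : Vᵀ * V = 1)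
    (A : Matrix ι κ R) :
    ∑ i, ∑ j, (U * A * Vᵀ) i j ^ 2 = ∑ i, ∑ j, A i j ^ 2 := by
  rw [← trace_mul_transpose_self, ← trace_mul_transpose_self]
  simp only [transpose_mul, transpose_transpose, Matrix.mul_assoc]
  rw [← Matrix.mul_assoc Vᵀ, hV, Matrix.one_mul, trace_mul_comm, Matrix.mul_assoc,
    Matrix.mul_assoc, hU, Matrix.mul_one]

theorem singularValue_eq_of_charpoly_eq {m m' n : ℕ} {A : Matrix (Fin m) (Fin n) ℝ}
    {B : Matrix (Fin m') (Fin n) ℝ} (h : (Aᴴ * A).charpoly = (Bᴴ * B).charpoly) :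
    singularValue A = singularValue B := by
  unfold singularValue
  rw [((isHermitian_conjTranspose_mul_self A).eigenvalues_eq_eigenvalues_iff
    (isHermitian_conjTranspose_mul_self B)).mpr h]

theorem singularValue_mul_mul_transpose {k m n : ℕ} {U : Matrix (Fin k) (Fin m) ℝ}
    {V : Matrix (Fin n) (Fin n) ℝ} (hU : Uᵀ * U = 1) (hV : Vᵀ * V = 1)
    (A : Matrix (Fin m) (Fin n) ℝ) :
    singularValue (U * A * Vᵀ) = singularValue A := by
  apply singularValue_eq_of_charpoly_eq
  have : (U * A * Vᵀ)ᴴ * (U * A * Vᵀ) = V * (Aᴴ * A * Vᵀ) := by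
    simp only [conjTranspose_eq_transpose_of_trivial, transpose_mul, transpose_transpose,
      Matrix.mul_assoc]
    rw [← Matrix.mul_assoc Uᵀ, hU, Matrix.one_mul]
  rw [this, charpoly_mul_comm, Matrix.mul_assoc, hV, Matrix.mul_one]

theorem weightedNuclearNorm_mul_mul_transpose {k m n : ℕ} {U : Matrix (Fin k) (Fin m) ℝ}
    {V : Matrix (Fin n) (Fin n) ℝ} (hU : Uᵀ * U = 1) (hV : Vᵀ * V = 1) (Θ : Fin n → ℝ)
    (A : Matrix (Fin m) (Fin n) ℝ) :
    weightedNuclearNorm Θ (U * A * Vᵀ) = weightedNuclearNorm Θ A := by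
  rw [weightedNuclearNorm, singularValue_mul_mul_transpose hU hV, weightedNuclearNorm]

theorem sum_sq_sub_add_weightedNuclearNorm_mul_mul_transpose {k m n : ℕ}
    {U : Matrix (Fin k) (Fin m) ℝ} {V : Matrix (Fin n) (Fin n) ℝ} (hU : Uᵀ * U = 1)
    (hV : Vᵀ * V = 1) (Θ : Fin n → ℝ) (Y B : Matrix (Fin m) (Fin n) ℝ) :
    (∑ i, ∑ j, ((U * Y * Vᵀ - U * B * Vᵀ) i j) ^ 2) + weightedNuclearNorm Θ (U * B * Vᵀ)
      = (∑ i, ∑ j, ((Y - B) i j) ^ 2) + weightedNuclearNorm Θ B := by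
  rw [← Matrix.sub_mul, ← Matrix.mul_sub, sum_sq_mul_mul_transpose hU hV,
    weightedNuclearNorm_mul_mul_transpose hU hV]

theorem wnn_prox_reduces_to_diagonal_general {m n : ℕ}
    (Y : Matrix (Fin m) (Fin n) ℝ)
    (U : Matrix (Fin m) (Fin m) ℝ) (V : Matrix (Fin n) (Fin n) ℝ)
    (hU : U * Uᵀ = 1) (hV : V * Vᵀ = 1)
    (Sig : Matrix (Fin m) (Fin n) ℝ)
    (hY : Y = U * Sig * Vᵀ)
    (Θ : Fin n → ℝ) :
    (sInf (Set.range fun X : Matrix (Fin m) (Fin n) ℝ =>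
        (∑ i, ∑ j, ((Y - X) i j) ^ 2) + weightedNuclearNorm Θ X)
      = sInf (Set.range fun B : Matrix (Fin m) (Fin n) ℝ =>
        (∑ i, ∑ j, ((Sig - B) i j) ^ 2) + weightedNuclearNorm Θ B)) ∧
    ∀ Bhat : Matrix (Fin m) (Fin n) ℝ,
      (∀ B, (∑ i, ∑ j, ((Sig - Bhat) i j) ^ 2) + weightedNuclearNorm Θ Bhat
          ≤ (∑ i, ∑ j, ((Sig - B) i j) ^ 2) + weightedNuclearNorm Θ B) →
      ∀ X, (∑ i, ∑ j, ((Y - U * Bhat * Vᵀ) i j) ^ 2) + weightedNuclearNorm Θ (U * Bhat * Vᵀ)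
          ≤ (∑ i, ∑ j, ((Y - X) i j) ^ 2) + weightedNuclearNorm Θ X := by
  subst hY
  have hobj := sum_sq_sub_add_weightedNuclearNorm_mul_mul_transpose
    (mul_eq_one_comm.mp hU) (mul_eq_one_comm.mp hV) Θ Sig
  have hsurj : Function.Surjective fun B : Matrix (Fin m) (Fin n) ℝ => U * B * Vᵀ :=
    fun X => ⟨Uᵀ * X * V, by simp only [Matrix.mul_assoc, hV, Matrix.mul_one,
      ← Matrix.mul_assoc U, hU, Matrix.one_mul]⟩
  refine ⟨?_, fun Bhat hBhat X => ?_⟩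
  · rw [← hsurj.range_comp]
    exact congrArg (fun s => sInf (Set.range s)) (funext hobj)
  · obtain ⟨B, rfl⟩ := hsurj X
    rw [hobj, hobj]
    exact hBhat B

theorem wnn_prox_reduces_to_diagonal {m n : ℕ}
    (Y : Matrix (Fin m) (Fin n) ℝ)
    (U : Matrix (Fin m) (Fin m) ℝ) (V : Matrix (Fin n) (Fin n) ℝ)
    (hU : U * Uᵀ = 1) (hU' : Uᵀ * U = 1) (hV : V * Vᵀ = 1) (hV' : Vᵀ * V = 1)
    (Sig : Matrix (Fin m) (Fin n) ℝ)
    (hSig : Sig = Matrix.of fun (i : Fin m) (j : Fin n) =>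
        if (i : ℕ) = (j : ℕ) then singularValue Y j else 0)
    (hY : Y = U * Sig * Vᵀ)
    (Θ : Fin n → ℝ) (hΘ0 : ∀ i, 0 ≤ Θ i) :
    (sInf (Set.range fun X : Matrix (Fin m) (Fin n) ℝ =>
        (∑ i, ∑ j, ((Y - X) i j) ^ 2) + weightedNuclearNorm Θ X)
      = sInf (Set.range fun B : Matrix (Fin m) (Fin n) ℝ =>
        (∑ i, ∑ j, ((Sig - B) i j) ^ 2) + weightedNuclearNorm Θ B)) ∧
    ∀ Bhat : Matrix (Fin m) (Fin n) ℝ,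
      (∀ B, (∑ i, ∑ j, ((Sig - Bhat) i j) ^ 2) + weightedNuclearNorm Θ Bhat
          ≤ (∑ i, ∑ j, ((Sig - B) i j) ^ 2) + weightedNuclearNorm Θ B) →
      ∀ X, (∑ i, ∑ j, ((Y - U * Bhat * Vᵀ) i j) ^ 2) + weightedNuclearNorm Θ (U * Bhat * Vᵀ)
          ≤ (∑ i, ∑ j, ((Y - X) i j) ^ 2) + weightedNuclearNorm Θ X :=
  wnn_prox_reduces_to_diagonal_general Y U V hU hV Sig hY Θ
end

section
/- If S ∈ ℝ^{3F×P} and S♯ ∈ ℝ^{F×3P} is the rearrangement placing, for each frame f, the three rows (X, Y, Z coordinates) of frame f side by side as a single row, then rank(S) ≤ 3·rank(S♯). -/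
/-!
Group the rows of `S` by the coordinate `c`. The block of rows `(·, c)` is the column block
`(c, ·)` of `S♯`, so its rank is at most `rank S♯`; and `S` is the sum of its three blocks
padded by zero rows, so `rank S` is at most the sum of the three block ranks.
-/

open Matrix

namespace Matrix

variable {m n ι K : Type*} [Fintype n] [Field K]

theorem rank_add_le (A B : Matrix m n K) : (A + B).rank ≤ A.rank + B.rank := by
  have hrange : LinearMap.range (A + B).mulVecLin ≤
      LinearMap.range A.mulVecLin ⊔ LinearMap.range B.mulVecLin := by
    rintro _ ⟨v, rfl⟩
    exact Submodule.mem_sup.mpr ⟨A *ᵥ v, ⟨v, rfl⟩, B *ᵥ v, ⟨v, rfl⟩, (add_mulVec A B v).symm⟩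
  exact (Submodule.finrank_mono hrange).trans (Submodule.finrank_add_le_finrank_add_finrank _ _)

theorem rank_sum_le (s : Finset ι) (A : ι → Matrix m n K) :
    (∑ c ∈ s, A c).rank ≤ ∑ c ∈ s, (A c).rank :=
  Finset.le_sum_of_subadditive (fun B : Matrix m n K => B.rank) rank_zero.le rank_add_le s A

theorem rank_le_sum_rank_submatrix_rows [Fintype m] [Fintype ι] [DecidableEq m] [DecidableEq ι]
    (A : Matrix (m × ι) n K) :
    A.rank ≤ ∑ c, (A.submatrix (·, c) id).rank := by
  let embed (c : ι) : Matrix (m × ι) m K := of fun i j => if i = (j, c) then 1 else 0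
  have hA : A = ∑ c, embed c * A.submatrix (·, c) id := by
    ext ⟨i, c⟩ j
    simp [embed, Matrix.sum_apply, mul_apply, ite_and]
  calc A.rank = (∑ c, embed c * A.submatrix (·, c) id).rank := congrArg rank hA
    _ ≤ ∑ c, (embed c * A.submatrix (·, c) id).rank := rank_sum_le _ _
    _ ≤ ∑ c, (A.submatrix (·, c) id).rank :=
      Finset.sum_le_sum fun c _ => rank_mul_le_right _ _

theorem rank_le_card_mul_rank_of_rearrange [Fintype m] [Fintype ι] [DecidableEq m]
    [DecidableEq ι]     (S : Matrix (m × ι) n K) (T : Matrix m (ι × n) K)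
    (hST : ∀ i c j, T i (c, j) = S (i, c) j) :
    S.rank ≤ Fintype.card ι * T.rank := by
  have hblock (c : ι) : S.submatrix (·, c) id = T.submatrix id (Prod.mk c) := by
    ext i j
    exact (hST i c j).symm
  calc S.rank ≤ ∑ c, (S.submatrix (·, c) id).rank := rank_le_sum_rank_submatrix_rows S
    _ ≤ ∑ _c : ι, T.rank :=
      Finset.sum_le_sum fun c _ => (hblock c).symm ▸ rank_submatrix_le T id (Prod.mk c)
    _ = Fintype.card ι * T.rank := by rw [Finset.sum_const, Finset.card_univ, smul_eq_mul]

end Matrix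

theorem rank_rearranged_shape {F P : ℕ}
    (S : Matrix (Fin F × Fin 3) (Fin P) ℝ)
    (Ssharp : Matrix (Fin F) (Fin 3 × Fin P) ℝ)
    (hrearr : ∀ (f : Fin F) (c : Fin 3) (p : Fin P), Ssharp f (c, p) = S (f, c) p) :
    S.rank ≤ 3 * Ssharp.rank := by
  simpa using rank_le_card_mul_rank_of_rearrange S Ssharp hrearr
end
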